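/- arXiv:1009.2717 — 3 statements merged into one kernel-verified Lean document; each statement's English description precedes it below -/
import Mathlib

section
/- Let A and B be finite nonempty index sets and (a_{ij}) a matrix of nonnegative real entries indexed by A × B. Let q, s1, s2 ≥ 1 with q > max(s1, s2), and set w = (q²(s1+s2) - 2q s1 s2)/(q² - s1 s2), f1 = (q² s1 - q s1 s2)/(q²(s1+s2) - 2q s1 s2), f2 = (q² s2 - q s1 s2)/(q²(s1+s2) - 2q s1 s2). Then (Σ_{(i,j)∈A×B} a_{ij}^w)^{1/w} ≤ (Σ_{i∈A} ‖β_i‖_q^{s1})^{f1/s1} · (Σ_{j∈B} ‖α_j‖_q^{s2})^{f2/s2}, where β_i = (a_{ij})_{j∈B} is the i-th row and α_j = (a_{ij})_{i∈A} is the j-th column, and ‖·‖_q denotes the ℓ_q norm. -/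
open Finset in
theorem mink_aux {ι κ : Type*} [Fintype ι] {p : ℝ} (hp : 1 ≤ p) (t : Finset κ)
    (b : ι → κ → ℝ) (hb : ∀ i j, 0 ≤ b i j) :
    (∑ i : ι, (∑ j ∈ t, b i j) ^ p) ^ (1 / p) ≤ ∑ j ∈ t, (∑ i : ι, b i j ^ p) ^ (1 / p) := by
  induction t using Finset.cons_induction with
  | empty =>
      simp [Real.zero_rpow (by positivity : p ≠ 0), Real.zero_rpow (by positivity : p⁻¹ ≠ 0)]
  | cons j t hj ih =>
      simp only [Finset.sum_cons]
      calc (∑ i : ι, (b i j + ∑ j' ∈ t, b i j') ^ p) ^ (1 / p)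
          ≤ (∑ i : ι, b i j ^ p) ^ (1 / p) + (∑ i : ι, (∑ j' ∈ t, b i j') ^ p) ^ (1 / p) :=
            Real.Lp_add_le_of_nonneg hp (s := Finset.univ) (fun i _ => hb i j)
              (fun i _ => Finset.sum_nonneg fun j' _ => hb i j')
        _ ≤ (∑ i : ι, b i j ^ p) ^ (1 / p) + ∑ j' ∈ t, (∑ i : ι, b i j' ^ p) ^ (1 / p) := by
            linarith [ih]

open Finset in
theorem stmt_2 {A B : Type*} [Fintype A] [Fintype B] [Nonempty A] [Nonempty B]
    (a : A → B → ℝ) (ha : ∀ i j, 0 ≤ a i j)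
    (q s1 s2 : ℝ) (hq : 1 ≤ q) (hs1 : 1 ≤ s1) (hs2 : 1 ≤ s2)
    (h1 : s1 < q) (h2 : s2 < q) :
    let w : ℝ := (q ^ 2 * (s1 + s2) - 2 * q * s1 * s2) / (q ^ 2 - s1 * s2)
    let f1 : ℝ := (q ^ 2 * s1 - q * s1 * s2) / (q ^ 2 * (s1 + s2) - 2 * q * s1 * s2)
    let f2 : ℝ := (q ^ 2 * s2 - q * s1 * s2) / (q ^ 2 * (s1 + s2) - 2 * q * s1 * s2)
    (∑ i : A, ∑ j : B, a i j ^ w) ^ (1 / w) ≤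
      (∑ i : A, ((∑ j : B, a i j ^ q) ^ (1 / q)) ^ s1) ^ (f1 / s1) *
      (∑ j : B, ((∑ i : A, a i j ^ q) ^ (1 / q)) ^ s2) ^ (f2 / s2) := by
  intro w f1 f2
  have hwdef : w = (q ^ 2 * (s1 + s2) - 2 * q * s1 * s2) / (q ^ 2 - s1 * s2) := rfl
  have hf1def : f1 = (q ^ 2 * s1 - q * s1 * s2) / (q ^ 2 * (s1 + s2) - 2 * q * s1 * s2) := rfl
  have hf2def : f2 = (q ^ 2 * s2 - q * s1 * s2) / (q ^ 2 * (s1 + s2) - 2 * q * s1 * s2) := rfl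
  clear_value w f1 f2
  have hq0 : (0:ℝ) < q := lt_of_lt_of_le one_pos hq
  have hs10 : (0:ℝ) < s1 := lt_of_lt_of_le one_pos hs1
  have hs20 : (0:ℝ) < s2 := lt_of_lt_of_le one_pos hs2
  have hQ : (0:ℝ) < q ^ 2 - s1 * s2 := by nlinarith
  have hD : (0:ℝ) < q ^ 2 * (s1 + s2) - 2 * q * s1 * s2 := by
    nlinarith [mul_pos (mul_pos hq0 hs10) (sub_pos.2 h2),
      mul_pos (mul_pos hq0 hs20) (sub_pos.2 h1)]
  have hQ0 : q ^ 2 - s1 * s2 ≠ 0 := ne_of_gt hQ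
  have hD0 : q ^ 2 * (s1 + s2) - 2 * q * s1 * s2 ≠ 0 := ne_of_gt hD
  set u1 : ℝ := q * s1 * (q - s2) / (q ^ 2 - s1 * s2) with hu1def
  set u2 : ℝ := q * s2 * (q - s1) / (q ^ 2 - s1 * s2) with hu2def
  have hu1 : 0 < u1 := by
    apply div_pos _ hQ; have : 0 < q - s2 := by linarith
    positivity
  have hu2 : 0 < u2 := by
    apply div_pos _ hQ; have : 0 < q - s1 := by linarith
    positivity
  have hw : w = u1 + u2 := by
    rw [hwdef, hu1def, hu2def, ← add_div]
    ring
  have hw0 : 0 < w := by rw [hw]; linarith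
  -- u bounds
  have hu1q : u1 < q := by
    rw [hu1def, div_lt_iff₀ hQ]
    nlinarith [mul_pos (mul_pos hq0 hq0) (sub_pos.2 h1)]
  have hu1s1 : u1 < s1 := by
    rw [hu1def, div_lt_iff₀ hQ]
    nlinarith [mul_pos (mul_pos hs10 hs20) (sub_pos.2 h1)]
  have hu2q : u2 < q := by
    rw [hu2def, div_lt_iff₀ hQ]
    nlinarith [mul_pos (mul_pos hq0 hq0) (sub_pos.2 h2)]
  have hu2s2 : u2 < s2 := by
    rw [hu2def, div_lt_iff₀ hQ]
    nlinarith [mul_pos (mul_pos hs10 hs20) (sub_pos.2 h2)]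
  -- conjugate exponent facts
  have hc1 : Real.HolderConjugate (q / u1) (s2 / u2) := by
    rw [Real.holderConjugate_iff]
    constructor
    · rw [lt_div_iff₀ hu1]; linarith
    · rw [inv_div, inv_div]
      rw [div_add_div _ _ (ne_of_gt hq0) (ne_of_gt hs20), div_eq_one_iff_eq (by positivity)]
      rw [hu1def, hu2def]
      field_simp
      ring
  have hc2 : Real.HolderConjugate (s1 / u1) (q / u2) := by
    rw [Real.holderConjugate_iff]
    constructor
    · rw [lt_div_iff₀ hu1]; linarith
    · rw [inv_div, inv_div]
      rw [div_add_div _ _ (ne_of_gt hs10) (ne_of_gt hq0), div_eq_one_iff_eq (by positivity)]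
      rw [hu1def, hu2def]
      field_simp
      ring
  set P : A → ℝ := fun i => (∑ j : B, a i j ^ q) ^ (1 / q) with hPdef
  set R : A → ℝ := fun i => (∑ j : B, a i j ^ s2) ^ (1 / s2) with hRdef
  have hPnn : ∀ i, 0 ≤ P i := fun i => Real.rpow_nonneg (Finset.sum_nonneg fun j _ => Real.rpow_nonneg (ha i j) _) _
  have hRnn : ∀ i, 0 ≤ R i := fun i => Real.rpow_nonneg (Finset.sum_nonneg fun j _ => Real.rpow_nonneg (ha i j) _) _
  -- Step 1: inner Hölder
  have step1 : ∀ i, (∑ j : B, a i j ^ w) ≤ P i ^ u1 * R i ^ u2 := by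
    intro i
    have e1 : (∑ j : B, a i j ^ w) = ∑ j : B, (a i j ^ u1) * (a i j ^ u2) := by
      refine Finset.sum_congr rfl fun j _ => ?_
      rw [hw, Real.rpow_add' (ha i j) (by linarith)]
    rw [e1]
    calc ∑ j : B, (a i j ^ u1) * (a i j ^ u2)
        ≤ (∑ j : B, (a i j ^ u1) ^ (q / u1)) ^ (1 / (q / u1)) *
          (∑ j : B, (a i j ^ u2) ^ (s2 / u2)) ^ (1 / (s2 / u2)) :=
          Real.inner_le_Lp_mul_Lq_of_nonneg _ hc1
            (fun j _ => Real.rpow_nonneg (ha i j) _) (fun j _ => Real.rpow_nonneg (ha i j) _)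
      _ = P i ^ u1 * R i ^ u2 := by
          have e2 : ∀ j, (a i j ^ u1) ^ (q / u1) = a i j ^ q := by
            intro j
            rw [← Real.rpow_mul (ha i j), mul_div_cancel₀ _ (ne_of_gt hu1)]
          have e3 : ∀ j, (a i j ^ u2) ^ (s2 / u2) = a i j ^ s2 := by
            intro j
            rw [← Real.rpow_mul (ha i j), mul_div_cancel₀ _ (ne_of_gt hu2)]
          simp only [e2, e3]
          rw [hPdef, hRdef]
          rw [← Real.rpow_mul (Finset.sum_nonneg fun j _ => Real.rpow_nonneg (ha i j) _),
              ← Real.rpow_mul (Finset.sum_nonneg fun j _ => Real.rpow_nonneg (ha i j) _)]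
          rw [one_div_div, one_div_div]
          congr 1
          · congr 1; field_simp
          · congr 1; field_simp
  -- Step 2: outer Hölder
  set N1 : ℝ := ∑ i : A, P i ^ s1 with hN1def
  set T : ℝ := ∑ j : B, ((∑ i : A, a i j ^ q) ^ (1 / q)) ^ s2 with hTdef
  have hN1nn : 0 ≤ N1 := Finset.sum_nonneg fun i _ => Real.rpow_nonneg (hPnn i) _
  have hTnn : 0 ≤ T := Finset.sum_nonneg fun j _ => Real.rpow_nonneg (Real.rpow_nonneg (Finset.sum_nonneg fun i _ => Real.rpow_nonneg (ha i j) _) _) _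
  have step2 : (∑ i : A, P i ^ u1 * R i ^ u2) ≤ N1 ^ (u1 / s1) * (∑ i : A, R i ^ q) ^ (u2 / q) := by
    calc ∑ i : A, P i ^ u1 * R i ^ u2
        ≤ (∑ i : A, (P i ^ u1) ^ (s1 / u1)) ^ (1 / (s1 / u1)) *
          (∑ i : A, (R i ^ u2) ^ (q / u2)) ^ (1 / (q / u2)) :=
          Real.inner_le_Lp_mul_Lq_of_nonneg _ hc2
            (fun i _ => Real.rpow_nonneg (hPnn i) _) (fun i _ => Real.rpow_nonneg (hRnn i) _)
      _ = N1 ^ (u1 / s1) * (∑ i : A, R i ^ q) ^ (u2 / q) := by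
          have e2 : ∀ i, (P i ^ u1) ^ (s1 / u1) = P i ^ s1 := by
            intro i; rw [← Real.rpow_mul (hPnn i), mul_div_cancel₀ _ (ne_of_gt hu1)]
          have e3 : ∀ i, (R i ^ u2) ^ (q / u2) = R i ^ q := by
            intro i; rw [← Real.rpow_mul (hRnn i), mul_div_cancel₀ _ (ne_of_gt hu2)]
          simp only [e2, e3, one_div_div]
          rfl
  -- Step 3: Minkowski
  have step3 : (∑ i : A, R i ^ q) ^ (u2 / q) ≤ T ^ (u2 / s2) := by
    have hp1 : (1:ℝ) ≤ q / s2 := by rw [le_div_iff₀ hs20]; linarith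
    have hmink := mink_aux hp1 Finset.univ (fun i j => a i j ^ s2)
      (fun i j => Real.rpow_nonneg (ha i j) _)
    have eL : ∀ i, (∑ j : B, a i j ^ s2) ^ (q / s2) = R i ^ q := by
      intro i
      rw [hRdef]
      rw [← Real.rpow_mul (Finset.sum_nonneg fun j _ => Real.rpow_nonneg (ha i j) _)]
      congr 1; field_simp
    have eR : ∀ j, (∑ i : A, (a i j ^ s2) ^ (q / s2)) ^ (1 / (q / s2))
        = ((∑ i : A, a i j ^ q) ^ (1 / q)) ^ s2 := by
      intro j
      have e4 : ∀ i, (a i j ^ s2) ^ (q / s2) = a i j ^ q := by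
        intro i; rw [← Real.rpow_mul (ha i j), mul_div_cancel₀ _ (ne_of_gt hs20)]
      simp only [e4]
      rw [← Real.rpow_mul (Finset.sum_nonneg fun i _ => Real.rpow_nonneg (ha i j) _),
          one_div_div]
      congr 1; field_simp
    simp only [eL, eR] at hmink
    -- hmink : (∑ i, R i ^ q) ^ (1 / (q / s2)) ≤ T
    rw [one_div_div] at hmink
    have hbase : (0:ℝ) ≤ ∑ i : A, R i ^ q :=
      Finset.sum_nonneg fun i _ => Real.rpow_nonneg (hRnn i) _
    have : (∑ i : A, R i ^ q) ^ (u2 / q) = (((∑ i : A, R i ^ q) ^ (s2 / q)) ^ (u2 / s2)) := by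
      rw [← Real.rpow_mul hbase]
      congr 1; field_simp
    rw [this]
    exact Real.rpow_le_rpow (Real.rpow_nonneg hbase _) hmink (by positivity)
  -- combine
  have hS : (∑ i : A, ∑ j : B, a i j ^ w) ≤ N1 ^ (u1 / s1) * T ^ (u2 / s2) := by
    calc (∑ i : A, ∑ j : B, a i j ^ w)
        ≤ ∑ i : A, P i ^ u1 * R i ^ u2 := Finset.sum_le_sum fun i _ => step1 i
      _ ≤ N1 ^ (u1 / s1) * (∑ i : A, R i ^ q) ^ (u2 / q) := step2
      _ ≤ N1 ^ (u1 / s1) * T ^ (u2 / s2) := by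
          apply mul_le_mul_of_nonneg_left step3 (Real.rpow_nonneg hN1nn _)
  have hSnn : (0:ℝ) ≤ ∑ i : A, ∑ j : B, a i j ^ w :=
    Finset.sum_nonneg fun i _ => Finset.sum_nonneg fun j _ => Real.rpow_nonneg (ha i j) _
  calc (∑ i : A, ∑ j : B, a i j ^ w) ^ (1 / w)
      ≤ (N1 ^ (u1 / s1) * T ^ (u2 / s2)) ^ (1 / w) :=
        Real.rpow_le_rpow hSnn hS (by positivity)
    _ = N1 ^ (f1 / s1) * T ^ (f2 / s2) := by
        rw [Real.mul_rpow (Real.rpow_nonneg hN1nn _) (Real.rpow_nonneg hTnn _),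
            ← Real.rpow_mul hN1nn, ← Real.rpow_mul hTnn]
        congr 2
        · show u1 / s1 * (1 / w) = f1 / s1
          rw [hwdef, hf1def, hu1def]
          field_simp
        · show u2 / s2 * (1 / w) = f2 / s2
          rw [hwdef, hf2def, hu2def]
          generalize q ^ 2 * (s1 + s2) - 2 * q * s1 * s2 = D at hD0 ⊢
          generalize q ^ 2 - s1 * s2 = Q at hQ0 ⊢
          field_simp
end

section
/- For every 0 < p < ∞ there exist constants A_p, B_p > 0 such that for every N and all real scalars a_1, ..., a_N: A_p (Σ |a_n|²)^{1/2} ≤ (∫₀¹ |Σ a_n r_n(t)|^p dt)^{1/p} ≤ B_p (Σ |a_n|²)^{1/2}, where r_n are the Rademacher functions. Moreover B_2 = 1. -/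
noncomputable def rademacher (n : ℕ) (t : ℝ) : ℝ :=
  Real.sign (Real.sin (2 ^ n * Real.pi * t))

open MeasureTheory Finset Real

namespace Khin

def sg (b : Bool) : ℝ := if b then 1 else -1

lemma sg_not (b : Bool) : sg (!b) = - sg b := by cases b <;> simp [sg]

lemma sg_true : sg true = 1 := rfl

lemma sg_false : sg false = -1 := rfl

lemma measurable_sign : Measurable (Real.sign) := by
  have h : (Real.sign) = fun r : ℝ => if r < 0 then (-1:ℝ) else if 0 < r then 1 else 0 := by
    funext r; rfl
  rw [h]
  exact Measurable.ite (measurableSet_lt measurable_id measurable_const) measurable_const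
    (Measurable.ite (measurableSet_lt measurable_const measurable_id) measurable_const
      measurable_const)

lemma measurable_rademacher (n : ℕ) : Measurable (rademacher n) :=
  measurable_sign.comp (Real.measurable_sin.comp (measurable_id.const_mul _))

lemma abs_rademacher_le (n : ℕ) (t : ℝ) : |rademacher n t| ≤ 1 := by
  rcases Real.sign_apply_eq (Real.sin (2 ^ n * Real.pi * t)) with h | h | h <;>
    simp [rademacher, h]

lemma rademacher_succ (n : ℕ) (t : ℝ) : rademacher (n + 1) t = rademacher n (2 * t) := by
  unfold rademacher; congr 2; ring

lemma rademacher_add_one (n : ℕ) (t : ℝ) : rademacher (n + 1) (t + 1) = rademacher (n + 1) t := by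
  unfold rademacher
  congr 1
  have h : (2:ℝ) ^ (n+1) * π * (t+1) = 2 ^ (n+1) * π * t + ((2^n : ℤ) : ℝ) * (2 * π) := by
    push_cast; ring
  rw [h, Real.sin_add_int_mul_two_pi]

lemma rademacher_zero {t : ℝ} (h0 : 0 < t) (h1 : t < 1) : rademacher 0 t = 1 := by
  unfold rademacher
  apply Real.sign_of_pos
  apply Real.sin_pos_of_pos_of_lt_pi <;> · simp only [pow_zero, one_mul]; nlinarith [Real.pi_pos]

lemma rademacher_one_pos {t : ℝ} (h0 : 0 < t) (h1 : t < 1/2) : rademacher 1 t = 1 := by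
  unfold rademacher
  apply Real.sign_of_pos
  apply Real.sin_pos_of_pos_of_lt_pi <;> · simp only [pow_one]; nlinarith [Real.pi_pos]

lemma rademacher_one_neg {t : ℝ} (h0 : 1/2 < t) (h1 : t < 1) : rademacher 1 t = -1 := by
  unfold rademacher
  apply Real.sign_of_neg
  have h2 : 0 < Real.sin (2 ^ 1 * π * t - π) := by
    apply Real.sin_pos_of_pos_of_lt_pi <;> · simp only [pow_one]; nlinarith [Real.pi_pos]
  have h3 := Real.sin_sub_pi (2 ^ 1 * π * t)
  linarith [h3 ▸ h2]

lemma intervalIntegrable_of_bounded {g : ℝ → ℝ} (hm : Measurable g) {C : ℝ}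
    (hb : ∀ t, |g t| ≤ C) (x y : ℝ) : IntervalIntegrable g volume x y := by
  rw [intervalIntegrable_iff]
  apply Measure.integrableOn_of_bounded (M := C)
  · exact (measure_Ioc_lt_top).ne
  · exact hm.aestronglyMeasurable
  · exact ae_of_all _ fun t => by simpa [Real.norm_eq_abs] using hb t

lemma exists_bound (Φ : ℝ → ℝ) (hΦ : Continuous Φ) (c M : ℝ) :
    ∃ C, ∀ z : ℝ, |z - c| ≤ M → |Φ z| ≤ C := by
  obtain ⟨C, hC⟩ := (isCompact_Icc (a := c - M) (b := c + M)).exists_bound_of_continuousOn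
    hΦ.continuousOn
  refine ⟨C, fun z hz => ?_⟩
  have h := abs_le.mp hz
  simpa [Real.norm_eq_abs] using hC z ⟨by linarith [h.1], by linarith [h.2]⟩

lemma integrand_integrable (Φ : ℝ → ℝ) (hΦ : Continuous Φ) (N : ℕ) (c : ℝ) (a : Fin N → ℝ)
    (x y : ℝ) :
    IntervalIntegrable (fun t => Φ (c + ∑ n, a n * rademacher (n.1 + 1) t)) volume x y := by
  obtain ⟨C, hC⟩ := exists_bound Φ hΦ c (∑ n, |a n|)
  apply intervalIntegrable_of_bounded (C := C)
  · exact hΦ.measurable.comp (measurable_const.add (Finset.measurable_sum _ fun n _ =>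
      (measurable_rademacher (n.1 + 1)).const_mul _))
  · intro t
    apply hC
    rw [add_sub_cancel_left]
    calc |∑ n, a n * rademacher (n.1 + 1) t| ≤ ∑ n, |a n * rademacher (n.1 + 1) t| :=
          Finset.abs_sum_le_sum_abs _ _
      _ ≤ ∑ n, |a n| := Finset.sum_le_sum fun n _ => by
          rw [abs_mul]
          exact mul_le_of_le_one_right (abs_nonneg _) (abs_rademacher_le _ _)

lemma sum_pi_succ {M : Type*} [AddCommMonoid M] (N : ℕ) (F : (Fin (N+1) → Bool) → M) :
    ∑ g : Fin (N+1) → Bool, F g = ∑ b : Bool, ∑ f : Fin N → Bool, F (Fin.cons b f) := by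
  rw [← Equiv.sum_comp (Fin.consEquiv fun _ : Fin (N+1) => Bool) F, Fintype.sum_prod_type]
  rfl

lemma cons_sum (N : ℕ) (a : Fin (N+1) → ℝ) (b : Bool) (f : Fin N → Bool) :
    ∑ n : Fin (N+1), a n * sg ((Fin.cons b f : ∀ _ : Fin (N+1), Bool) n) = a 0 * sg b + ∑ n : Fin N, a n.succ * sg (f n) := by
  rw [Fin.sum_univ_succ]; simp




lemma ae_ne (c : ℝ) : ∀ᵐ t : ℝ ∂volume, t ≠ c := by
  have h : volume ({c} : Set ℝ) = 0 := Real.volume_singleton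
  filter_upwards [measure_eq_zero_iff_ae_notMem.mp h] with t ht
  simpa using ht

lemma core (Φ : ℝ → ℝ) (hΦ : Continuous Φ) :
    ∀ (N : ℕ) (c : ℝ) (a : Fin N → ℝ),
      (∫ t in (0:ℝ)..1, Φ (c + ∑ n, a n * rademacher (n.1 + 1) t))
        = (2 ^ N : ℝ)⁻¹ * ∑ f : Fin N → Bool, Φ (c + ∑ n, a n * sg (f n)) := by
  intro N
  induction N with
  | zero => intro c a; simp
  | succ N ih =>
    intro c a
    have key1 : (∫ t in (0:ℝ)..(1/2), Φ (c + ∑ n : Fin (N+1), a n * rademacher (n.1 + 1) t))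
        = (1/2) * ∫ u in (0:ℝ)..1,
            Φ ((c + a 0) + ∑ n : Fin N, a n.succ * rademacher (n.1 + 1) u) := by
      have congr1 : ∀ᵐ t ∂volume, t ∈ Set.uIoc (0:ℝ) (1/2) →
          Φ (c + ∑ n : Fin (N+1), a n * rademacher (n.1 + 1) t)
            = (fun u => Φ ((c + a 0) + ∑ n : Fin N, a n.succ * rademacher (n.1 + 1) u))
              (2 * t) := by
        filter_upwards [ae_ne (1/2 : ℝ)] with t ht hmem
        rw [Set.uIoc_of_le (by norm_num)] at hmem
        have ht2 : t < 1/2 := lt_of_le_of_ne hmem.2 ht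
        show _ = Φ _
        congr 1
        rw [Fin.sum_univ_succ]
        simp only [Fin.val_zero, Fin.val_succ, zero_add]
        rw [rademacher_one_pos hmem.1 ht2, mul_one]
        rw [Finset.sum_congr rfl (fun n _ => by rw [rademacher_succ (n.1 + 1) t])]
        ring
      rw [intervalIntegral.integral_congr_ae congr1,
        intervalIntegral.integral_comp_mul_left
          (fun u => Φ ((c + a 0) + ∑ n : Fin N, a n.succ * rademacher (n.1 + 1) u))
          (two_ne_zero)]
      norm_num [smul_eq_mul]
    have key2 : (∫ t in (1/2:ℝ)..1, Φ (c + ∑ n : Fin (N+1), a n * rademacher (n.1 + 1) t))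
        = (1/2) * ∫ u in (0:ℝ)..1,
            Φ ((c - a 0) + ∑ n : Fin N, a n.succ * rademacher (n.1 + 1) u) := by
      have congr2 : ∀ᵐ t ∂volume, t ∈ Set.uIoc (1/2:ℝ) 1 →
          Φ (c + ∑ n : Fin (N+1), a n * rademacher (n.1 + 1) t)
            = (fun u => Φ ((c - a 0) + ∑ n : Fin N, a n.succ * rademacher (n.1 + 1) u))
              (2 * t) := by
        filter_upwards [ae_ne (1 : ℝ)] with t ht hmem
        rw [Set.uIoc_of_le (by norm_num)] at hmem
        have ht2 : t < 1 := lt_of_le_of_ne hmem.2 ht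
        show _ = Φ _
        congr 1
        rw [Fin.sum_univ_succ]
        simp only [Fin.val_zero, Fin.val_succ, zero_add]
        rw [rademacher_one_neg hmem.1 ht2, mul_neg_one]
        rw [Finset.sum_congr rfl (fun n _ => by rw [rademacher_succ (n.1 + 1) t])]
        ring
      rw [intervalIntegral.integral_congr_ae congr2,
        intervalIntegral.integral_comp_mul_left
          (fun u => Φ ((c - a 0) + ∑ n : Fin N, a n.succ * rademacher (n.1 + 1) u))
          (two_ne_zero)]
      have h12 : (2:ℝ) * (1/2) = 0 + 1 := by norm_num
      have h21 : (2:ℝ) * 1 = 1 + 1 := by norm_num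
      rw [h12, h21, ← intervalIntegral.integral_comp_add_right
        (fun u => Φ ((c - a 0) + ∑ n : Fin N, a n.succ * rademacher (n.1 + 1) u)) 1]
      simp only [rademacher_add_one, smul_eq_mul]
      norm_num
    rw [← intervalIntegral.integral_add_adjacent_intervals
        (integrand_integrable Φ hΦ (N+1) c a 0 (1/2)) (integrand_integrable Φ hΦ (N+1) c a (1/2) 1),
      key1, key2, ih (c + a 0) (fun n => a n.succ), ih (c - a 0) (fun n => a n.succ)]
    rw [sum_pi_succ N (fun g => Φ (c + ∑ n, a n * sg (g n))), Fintype.sum_bool]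
    simp only [cons_sum, sg_true, sg_false, mul_one, mul_neg_one, ← add_assoc,
      ← sub_eq_add_neg]
    rw [pow_succ]
    ring



lemma integral_eq (Φ : ℝ → ℝ) (hΦ : Continuous Φ) (hΦe : ∀ x, Φ (-x) = Φ x)
    (N : ℕ) (a : Fin N → ℝ) :
    (∫ t in (0:ℝ)..1, Φ (∑ n, a n * rademacher n t))
      = (2 ^ N : ℝ)⁻¹ * ∑ g : Fin N → Bool, Φ (∑ n, a n * sg (g n)) := by
  cases N with
  | zero => simp
  | succ N =>
    have congr0 : ∀ᵐ t ∂volume, t ∈ Set.uIoc (0:ℝ) 1 →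
        Φ (∑ n : Fin (N+1), a n * rademacher n t)
          = Φ (a 0 + ∑ n : Fin N, a n.succ * rademacher (n.1 + 1) t) := by
      filter_upwards [ae_ne (1 : ℝ)] with t ht hmem
      rw [Set.uIoc_of_le (by norm_num)] at hmem
      have ht1 : t < 1 := lt_of_le_of_ne hmem.2 ht
      congr 1
      rw [Fin.sum_univ_succ]
      simp only [Fin.val_zero, Fin.val_succ]
      rw [rademacher_zero hmem.1 ht1, mul_one]
    rw [intervalIntegral.integral_congr_ae congr0,
      core Φ hΦ N (a 0) (fun n => a n.succ),
      sum_pi_succ N (fun g => Φ (∑ n, a n * sg (g n))), Fintype.sum_bool]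
    simp only [cons_sum, sg_true, sg_false, mul_one, mul_neg_one]
    have hsym : (∑ f : Fin N → Bool, Φ (-a 0 + ∑ n : Fin N, a n.succ * sg (f n)))
        = ∑ f : Fin N → Bool, Φ (a 0 + ∑ n : Fin N, a n.succ * sg (f n)) := by
      apply Fintype.sum_bijective (fun f : Fin N → Bool => fun n => !(f n))
      · exact Function.Involutive.bijective fun f => by funext n; simp
      · intro f
        have h : a 0 + ∑ n : Fin N, a n.succ * sg (!(f n))
            = -(-a 0 + ∑ n : Fin N, a n.succ * sg (f n)) := by
          simp only [sg_not, mul_neg, Finset.sum_neg_distrib]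
          ring
        rw [h, hΦe]
    rw [hsym, pow_succ]
    ring

lemma discrete_sq (N : ℕ) (a : Fin N → ℝ) :
    ∑ g : Fin N → Bool, (∑ n, a n * sg (g n)) ^ 2 = 2 ^ N * ∑ n, (a n) ^ 2 := by
  induction N with
  | zero => simp
  | succ N ih =>
    rw [sum_pi_succ N (fun g => (∑ n, a n * sg (g n)) ^ 2), Fintype.sum_bool]
    simp only [cons_sum, sg_true, sg_false, mul_one, mul_neg_one]
    rw [← Finset.sum_add_distrib]
    have pt : ∀ f : Fin N → Bool,
        (a 0 + ∑ n : Fin N, a n.succ * sg (f n)) ^ 2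
          + (-a 0 + ∑ n : Fin N, a n.succ * sg (f n)) ^ 2
        = 2 * (a 0) ^ 2 + 2 * (∑ n : Fin N, a n.succ * sg (f n)) ^ 2 := fun f => by ring
    rw [Finset.sum_congr rfl fun f _ => pt f, Finset.sum_add_distrib, Finset.sum_const,
      ← Finset.mul_sum, ih (fun n => a n.succ), Fin.sum_univ_succ]
    simp only [Finset.card_univ, Fintype.card_fun, Fintype.card_bool, Fintype.card_fin, nsmul_eq_mul]
    push_cast
    ring

lemma discrete_exp (N : ℕ) (a : Fin N → ℝ) :
    ∑ g : Fin N → Bool, Real.exp (∑ n, a n * sg (g n))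
      ≤ 2 ^ N * Real.exp ((∑ n, (a n) ^ 2) / 2) := by
  induction N with
  | zero => simp
  | succ N ih =>
    rw [sum_pi_succ N (fun g => Real.exp (∑ n, a n * sg (g n))), Fintype.sum_bool]
    simp only [cons_sum, sg_true, sg_false, mul_one, mul_neg_one]
    rw [← Finset.sum_add_distrib]
    have pt : ∀ f : Fin N → Bool,
        Real.exp (a 0 + ∑ n : Fin N, a n.succ * sg (f n))
          + Real.exp (-a 0 + ∑ n : Fin N, a n.succ * sg (f n))
        ≤ 2 * Real.exp ((a 0) ^ 2 / 2)
            * Real.exp (∑ n : Fin N, a n.succ * sg (f n)) := by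
      intro f
      rw [Real.exp_add, Real.exp_add]
      have hch : Real.exp (a 0) + Real.exp (-a 0) ≤ 2 * Real.exp ((a 0) ^ 2 / 2) := by
        have h := Real.cosh_le_exp_half_sq (a 0)
        rw [Real.cosh_eq] at h
        linarith
      nlinarith [Real.exp_pos (∑ n : Fin N, a n.succ * sg (f n)),
        Real.exp_pos (a 0), Real.exp_pos (-a 0)]
    calc ∑ f : Fin N → Bool,
          (Real.exp (a 0 + ∑ n : Fin N, a n.succ * sg (f n))
            + Real.exp (-a 0 + ∑ n : Fin N, a n.succ * sg (f n)))
        ≤ ∑ f : Fin N → Bool, 2 * Real.exp ((a 0) ^ 2 / 2)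
            * Real.exp (∑ n : Fin N, a n.succ * sg (f n)) :=
          Finset.sum_le_sum fun f _ => pt f
      _ = 2 * Real.exp ((a 0) ^ 2 / 2)
            * ∑ f : Fin N → Bool, Real.exp (∑ n : Fin N, a n.succ * sg (f n)) := by
          rw [← Finset.mul_sum]
      _ ≤ 2 * Real.exp ((a 0) ^ 2 / 2)
            * (2 ^ N * Real.exp ((∑ n : Fin N, (a n.succ) ^ 2) / 2)) := by
          apply mul_le_mul_of_nonneg_left (ih (fun n => a n.succ)) (by positivity)
      _ = 2 ^ (N+1) * Real.exp ((∑ n : Fin (N+1), (a n) ^ 2) / 2) := by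
          rw [Fin.sum_univ_succ, show ((a 0) ^ 2 + ∑ n : Fin N, (a n.succ) ^ 2) / 2
              = (a 0) ^ 2 / 2 + (∑ n : Fin N, (a n.succ) ^ 2) / 2 by ring,
            Real.exp_add, pow_succ]
          ring



lemma abs_rpow_le_exp {q : ℝ} (hq : 0 < q) (y : ℝ) :
    |y| ^ q ≤ (Nat.factorial (Nat.ceil q) + 1 : ℝ) * (Real.exp y + Real.exp (-y)) := by
  set n := Nat.ceil q with hn
  have hK1 : (1:ℝ) ≤ (n.factorial + 1 : ℝ) := by
    have := Nat.cast_nonneg (α := ℝ) (n.factorial)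
    linarith
  have hey : Real.exp |y| ≤ Real.exp y + Real.exp (-y) := by
    rcases abs_cases y with ⟨h, _⟩ | ⟨h, _⟩ <;> rw [h] <;>
      nlinarith [Real.exp_pos y, Real.exp_pos (-y)]
  have hee : (0:ℝ) < Real.exp y + Real.exp (-y) := by positivity
  rcases le_or_gt (|y|) 1 with h | h
  · have h1 : |y| ^ q ≤ 1 := Real.rpow_le_one (abs_nonneg y) h hq.le
    have h2 : (1:ℝ) ≤ Real.exp y + Real.exp (-y) :=
      le_trans (Real.one_le_exp (abs_nonneg y)) hey
    nlinarith
  · have h1 : |y| ^ q ≤ |y| ^ (n : ℝ) :=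
      Real.rpow_le_rpow_of_exponent_le h.le (Nat.le_ceil q)
    have h2 : |y| ^ (n : ℝ) = |y| ^ n := Real.rpow_natCast _ _
    have hfac : (0:ℝ) < (n.factorial : ℝ) := by exact_mod_cast Nat.factorial_pos n
    have h3 : |y| ^ n ≤ (n.factorial : ℝ) * Real.exp |y| := by
      have hterm : |y| ^ n / (n.factorial : ℝ)
          ≤ ∑ i ∈ Finset.range (n + 1), |y| ^ i / (i.factorial : ℝ) :=
        Finset.single_le_sum (f := fun i => |y| ^ i / (i.factorial : ℝ))
          (fun i _ => by positivity) (Finset.self_mem_range_succ _)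
      have hsum := Real.sum_le_exp_of_nonneg (abs_nonneg y) (n + 1)
      have := hterm.trans hsum
      rw [div_le_iff₀ hfac] at this
      linarith [this]
    have h4 : (n.factorial : ℝ) * Real.exp |y| ≤ ((n.factorial : ℝ) + 1) * (Real.exp y + Real.exp (-y)) := by
      nlinarith
    calc |y| ^ q ≤ |y| ^ (n : ℝ) := h1
      _ = |y| ^ n := h2
      _ ≤ (n.factorial : ℝ) * Real.exp |y| := h3
      _ ≤ ((n.factorial : ℝ) + 1) * (Real.exp y + Real.exp (-y)) := h4

/-- The upper discrete Khinchine bound, for any exponent `q > 0`. -/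
lemma discrete_upper {q : ℝ} (hq : 0 < q) (N : ℕ) (a : Fin N → ℝ) :
    ∑ g : Fin N → Bool, |∑ n, a n * sg (g n)| ^ q
      ≤ (2 * (Nat.factorial (Nat.ceil q) + 1 : ℝ) * Real.exp (1/2)) * 2 ^ N
          * ((∑ n, (a n) ^ 2) ^ ((1:ℝ)/2)) ^ q := by
  set s := ∑ n, (a n) ^ 2 with hs
  have hs0 : 0 ≤ s := Finset.sum_nonneg fun n _ => sq_nonneg _
  set K := (Nat.factorial (Nat.ceil q) + 1 : ℝ) with hKdef
  have hK : (0:ℝ) < K := by positivity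
  rcases eq_or_lt_of_le hs0 with h0 | hpos
  · have ha : ∀ n, a n = 0 := by
      intro n
      have h := (Finset.sum_eq_zero_iff_of_nonneg
        (fun i (_ : i ∈ Finset.univ) => sq_nonneg (a i))).mp h0.symm n (Finset.mem_univ n)
      exact pow_eq_zero_iff (two_ne_zero) |>.mp h
    have hz : ∀ g : Fin N → Bool, |∑ n, a n * sg (g n)| ^ q = 0 := fun g => by
      simp [ha, Real.zero_rpow hq.ne']
    rw [Finset.sum_eq_zero fun g _ => hz g]
    positivity
  · set σ := s ^ ((1:ℝ)/2) with hσdef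
    have hσpos : 0 < σ := Real.rpow_pos_of_pos hpos _
    have hσsq : σ ^ (2:ℕ) = s := by
      rw [hσdef, ← Real.rpow_natCast (s ^ ((1:ℝ)/2)) 2, ← Real.rpow_mul hs0]
      norm_num
    have hXle : ∀ g : Fin N → Bool, |∑ n, a n * sg (g n)| ^ q
        ≤ σ ^ q * (K * (Real.exp (∑ n, (σ⁻¹ * a n) * sg (g n))
            + Real.exp (∑ n, (-(σ⁻¹ * a n)) * sg (g n)))) := by
      intro g
      have h1 : |∑ n, a n * sg (g n)| ^ q
          = σ ^ q * |σ⁻¹ * ∑ n, a n * sg (g n)| ^ q := by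
        rw [abs_mul, abs_of_pos (inv_pos.mpr hσpos),
          ← Real.mul_rpow hσpos.le (by positivity), ← mul_assoc,
          mul_inv_cancel₀ hσpos.ne', one_mul]
      have h2 := abs_rpow_le_exp hq (σ⁻¹ * ∑ n, a n * sg (g n))
      have e1 : σ⁻¹ * ∑ n, a n * sg (g n) = ∑ n, (σ⁻¹ * a n) * sg (g n) := by
        rw [Finset.mul_sum]; exact Finset.sum_congr rfl fun n _ => by ring
      have e2 : -(σ⁻¹ * ∑ n, a n * sg (g n)) = ∑ n, (-(σ⁻¹ * a n)) * sg (g n) := by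
        rw [Finset.mul_sum, ← Finset.sum_neg_distrib]
        exact Finset.sum_congr rfl fun n _ => by ring
      rw [h1]
      apply mul_le_mul_of_nonneg_left _ (Real.rpow_nonneg hσpos.le q)
      calc |σ⁻¹ * ∑ n, a n * sg (g n)| ^ q
          ≤ K * (Real.exp (σ⁻¹ * ∑ n, a n * sg (g n))
              + Real.exp (-(σ⁻¹ * ∑ n, a n * sg (g n)))) := h2
        _ = K * (Real.exp (∑ n, (σ⁻¹ * a n) * sg (g n))
              + Real.exp (∑ n, (-(σ⁻¹ * a n)) * sg (g n))) := by rw [e2, e1]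
    have hsum1 : ∑ n, (σ⁻¹ * a n) ^ 2 = 1 := by
      have : ∑ n, (σ⁻¹ * a n) ^ 2 = σ⁻¹ ^ 2 * s := by
        rw [hs, Finset.mul_sum]; exact Finset.sum_congr rfl fun n _ => by ring
      rw [this, inv_pow, ← hσsq]
      field_simp
    have hsum2 : ∑ n, (-(σ⁻¹ * a n)) ^ 2 = 1 := by
      rw [← hsum1]; exact Finset.sum_congr rfl fun n _ => by ring
    calc ∑ g : Fin N → Bool, |∑ n, a n * sg (g n)| ^ q
        ≤ ∑ g : Fin N → Bool, σ ^ q * (K * (Real.exp (∑ n, (σ⁻¹ * a n) * sg (g n))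
            + Real.exp (∑ n, (-(σ⁻¹ * a n)) * sg (g n)))) :=
          Finset.sum_le_sum fun g _ => hXle g
      _ = σ ^ q * K * ∑ g : Fin N → Bool, (Real.exp (∑ n, (σ⁻¹ * a n) * sg (g n))
            + Real.exp (∑ n, (-(σ⁻¹ * a n)) * sg (g n))) := by
          rw [Finset.mul_sum]
          exact Finset.sum_congr rfl fun g _ => by ring
      _ = σ ^ q * K * ((∑ g : Fin N → Bool, Real.exp (∑ n, (σ⁻¹ * a n) * sg (g n)))
            + ∑ g : Fin N → Bool, Real.exp (∑ n, (-(σ⁻¹ * a n)) * sg (g n))) := by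
          rw [Finset.sum_add_distrib]
      _ ≤ σ ^ q * K * (2 ^ N * Real.exp ((∑ n, (σ⁻¹ * a n) ^ 2) / 2)
            + 2 ^ N * Real.exp ((∑ n, (-(σ⁻¹ * a n)) ^ 2) / 2)) := by
          apply mul_le_mul_of_nonneg_left _ (by positivity)
          exact add_le_add (discrete_exp N _) (discrete_exp N _)
      _ = (2 * K * Real.exp (1/2)) * 2 ^ N * σ ^ q := by
          rw [hsum1, hsum2]
          ring



lemma sq_rpow_half_q {q : ℝ} (x : ℝ) : ((x:ℝ) ^ 2) ^ (q/2 : ℝ) = |x| ^ q := by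
  rw [← sq_abs, ← Real.rpow_natCast |x| 2, ← Real.rpow_mul (abs_nonneg x)]
  norm_num
  rw [show (2:ℝ) * (q/2) = q by ring]

lemma rpow_half_rpow {s : ℝ} (hs : 0 ≤ s) (q : ℝ) : (s ^ ((1:ℝ)/2)) ^ q = s ^ (q/2 : ℝ) := by
  rw [← Real.rpow_mul hs]
  rw [show (1:ℝ)/2 * q = q/2 by ring]

lemma discrete_lower_two {q : ℝ} (hq : 2 ≤ q) (N : ℕ) (a : Fin N → ℝ) :
    2 ^ N * ((∑ n, (a n) ^ 2) ^ ((1:ℝ)/2)) ^ q ≤ ∑ g : Fin N → Bool, |∑ n, a n * sg (g n)| ^ q := by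
  set s := ∑ n, (a n) ^ 2 with hs
  have hs0 : 0 ≤ s := Finset.sum_nonneg fun n _ => sq_nonneg _
  have h2N : (0:ℝ) < 2 ^ N := by positivity
  have hw' : ∑ _g : Fin N → Bool, ((2:ℝ) ^ N)⁻¹ = 1 := by
    rw [Finset.sum_const, Finset.card_univ, Fintype.card_fun, Fintype.card_bool,
      Fintype.card_fin, nsmul_eq_mul]
    push_cast
    field_simp
  have h := Real.rpow_arith_mean_le_arith_mean_rpow (Finset.univ : Finset (Fin N → Bool))
    (fun _ => ((2:ℝ) ^ N)⁻¹) (fun g => (∑ n, a n * sg (g n)) ^ 2)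
    (fun i _ => by positivity) hw' (fun i _ => sq_nonneg _) (p := q/2) (by linarith)
  have e1 : ∑ g : Fin N → Bool, ((2:ℝ) ^ N)⁻¹ * (∑ n, a n * sg (g n)) ^ 2 = s := by
    rw [← Finset.mul_sum, discrete_sq]
    field_simp
    exact hs.symm
  have e2 : ∑ g : Fin N → Bool, ((2:ℝ) ^ N)⁻¹ * ((∑ n, a n * sg (g n)) ^ 2) ^ (q/2 : ℝ)
      = ((2:ℝ) ^ N)⁻¹ * ∑ g : Fin N → Bool, |∑ n, a n * sg (g n)| ^ q := by
    rw [Finset.mul_sum]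
    exact Finset.sum_congr rfl fun g _ => by rw [sq_rpow_half_q]
  rw [e1, e2] at h
  rw [rpow_half_rpow hs0]
  calc 2 ^ N * s ^ (q/2 : ℝ)
      ≤ 2 ^ N * (((2:ℝ) ^ N)⁻¹ * ∑ g : Fin N → Bool, |∑ n, a n * sg (g n)| ^ q) :=
        mul_le_mul_of_nonneg_left h h2N.le
    _ = ∑ g : Fin N → Bool, |∑ n, a n * sg (g n)| ^ q := by
        rw [← mul_assoc, mul_inv_cancel₀ h2N.ne', one_mul]

end Khin

theorem stmt_8 (p : ℝ) (hp : 0 < p) :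
    ∃ A B : ℝ, 0 < A ∧ 0 < B ∧
      (∀ (N : ℕ) (a : Fin N → ℝ),
        A * (∑ n, |a n| ^ 2) ^ ((1 : ℝ) / 2)
            ≤ (∫ t in (0 : ℝ)..1, |∑ n, a n * rademacher n t| ^ p) ^ (1 / p) ∧
        (∫ t in (0 : ℝ)..1, |∑ n, a n * rademacher n t| ^ p) ^ (1 / p)
            ≤ B * (∑ n, |a n| ^ 2) ^ ((1 : ℝ) / 2)) ∧
      (p = 2 → B = 1) := by
  have hcont : Continuous fun x : ℝ => |x| ^ p := by
    rw [continuous_iff_continuousAt]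
    intro x
    exact (Real.continuousAt_rpow_const _ _ (Or.inr hp.le)).comp continuous_abs.continuousAt
  have heven : ∀ x : ℝ, |(-x)| ^ p = |x| ^ p := fun x => by rw [abs_neg]
  have master : ∀ (N : ℕ) (a : Fin N → ℝ),
      (∫ t in (0:ℝ)..1, |∑ n, a n * rademacher n t| ^ p)
        = (2 ^ N : ℝ)⁻¹ * ∑ g : Fin N → Bool, |∑ n, a n * Khin.sg (g n)| ^ p :=
    fun N a => Khin.integral_eq (fun x => |x| ^ p) hcont heven N a
  by_cases hp2 : p = 2
  · subst hp2
    refine ⟨1, 1, one_pos, one_pos, fun N a => ?_, fun _ => rfl⟩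
    have key : (∫ t in (0:ℝ)..1, |∑ n, a n * rademacher n t| ^ (2:ℝ))
        = ∑ n, (a n) ^ 2 := by
      rw [master N a]
      have e : ∀ g : Fin N → Bool, |∑ n, a n * Khin.sg (g n)| ^ (2:ℝ)
          = (∑ n, a n * Khin.sg (g n)) ^ 2 := fun g => by
        rw [show (2:ℝ) = ((2:ℕ):ℝ) by norm_num, Real.rpow_natCast, sq_abs]
      rw [Finset.sum_congr rfl fun g _ => e g, Khin.discrete_sq, ← mul_assoc,
        inv_mul_cancel₀ (by positivity), one_mul]
    have hsq : ∑ n, |a n| ^ 2 = ∑ n, (a n) ^ 2 :=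
      Finset.sum_congr rfl fun n _ => by rw [sq_abs]
    constructor
    · rw [one_mul, key, hsq]
    · rw [one_mul, key, hsq]
  · set C : ℝ := 2 * ((Nat.ceil p).factorial + 1 : ℝ) * Real.exp (1/2) with hCdef
    set C' : ℝ := 2 * ((Nat.ceil (4 - p)).factorial + 1 : ℝ) * Real.exp (1/2) with hC'def
    have hCpos : 0 < C := by rw [hCdef]; positivity
    have hC'pos : 0 < C' := by rw [hC'def]; positivity
    refine ⟨(if 2 ≤ p then 1 else (C'⁻¹) ^ ((1:ℝ)/p)), C ^ ((1:ℝ)/p), ?_,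
      Real.rpow_pos_of_pos hCpos _, fun N a => ?_, fun h => absurd h hp2⟩
    · split_ifs
      · exact one_pos
      · exact Real.rpow_pos_of_pos (inv_pos.mpr hC'pos) _
    · have hsq : ∑ n, |a n| ^ 2 = ∑ n, (a n) ^ 2 :=
        Finset.sum_congr rfl fun n _ => by rw [sq_abs]
      rw [master N a, hsq]
      set s := ∑ n, (a n) ^ 2 with hsdef
      have hs0 : 0 ≤ s := Finset.sum_nonneg fun n _ => sq_nonneg _
      set σ := s ^ ((1:ℝ)/2) with hσdef
      have hσ0 : 0 ≤ σ := Real.rpow_nonneg hs0 _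
      set T := ∑ g : Fin N → Bool, |∑ n, a n * Khin.sg (g n)| ^ p with hTdef
      have hT0 : 0 ≤ T :=
        Finset.sum_nonneg fun g _ => Real.rpow_nonneg (abs_nonneg _) _
      have h2N : (0:ℝ) < 2 ^ N := by positivity
      have hm0 : (0:ℝ) ≤ ((2:ℝ) ^ N)⁻¹ * T := by positivity
      have hup : ((2:ℝ) ^ N)⁻¹ * T ≤ C * σ ^ p := by
        have h := Khin.discrete_upper hp N a
        calc ((2:ℝ) ^ N)⁻¹ * T ≤ ((2:ℝ) ^ N)⁻¹ * (C * 2 ^ N * σ ^ p) :=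
              mul_le_mul_of_nonneg_left h (by positivity)
          _ = C * σ ^ p := by field_simp
      have hσp1p : (σ ^ p) ^ ((1:ℝ)/p) = σ := by
        rw [← Real.rpow_mul hσ0, mul_one_div, div_self hp.ne', Real.rpow_one]
      constructor
      · by_cases h2 : 2 ≤ p
        · rw [if_pos h2, one_mul]
          have hlow := Khin.discrete_lower_two h2 N a
          have hle : σ ^ p ≤ ((2:ℝ) ^ N)⁻¹ * T := by
            calc σ ^ p = ((2:ℝ) ^ N)⁻¹ * (2 ^ N * σ ^ p) := by field_simp
              _ ≤ ((2:ℝ) ^ N)⁻¹ * T := mul_le_mul_of_nonneg_left hlow (by positivity)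
          calc σ = (σ ^ p) ^ ((1:ℝ)/p) := hσp1p.symm
            _ ≤ (((2:ℝ) ^ N)⁻¹ * T) ^ ((1:ℝ)/p) :=
              Real.rpow_le_rpow (Real.rpow_nonneg hσ0 _) hle (by positivity)
        · rw [if_neg h2]
          rw [not_le] at h2
          rcases eq_or_lt_of_le hs0 with h0 | hspos
          · have hσz : σ = 0 := by rw [hσdef, ← h0, Real.zero_rpow (by norm_num)]
            rw [hσz, mul_zero]
            exact Real.rpow_nonneg hm0 _
          · have hσpos : 0 < σ := Real.rpow_pos_of_pos hspos _
            have hq4 : (0:ℝ) < 4 - p := by linarith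
            have hcs := Finset.sum_mul_sq_le_sq_mul_sq (Finset.univ : Finset (Fin N → Bool))
              (fun g => |∑ n, a n * Khin.sg (g n)| ^ (p/2 : ℝ))
              (fun g => |∑ n, a n * Khin.sg (g n)| ^ ((4-p)/2 : ℝ))
            have hne : (p/2 : ℝ) + ((4-p)/2 : ℝ) ≠ 0 := by
              have h : (p/2 : ℝ) + ((4-p)/2 : ℝ) = 2 := by ring
              rw [h]; norm_num
            have e1 : ∀ g : Fin N → Bool,
                |∑ n, a n * Khin.sg (g n)| ^ (p/2 : ℝ) * |∑ n, a n * Khin.sg (g n)| ^ ((4-p)/2 : ℝ)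
                  = (∑ n, a n * Khin.sg (g n)) ^ 2 := fun g => by
              rw [← Real.rpow_add' (abs_nonneg _) hne,
                show (p/2 : ℝ) + ((4-p)/2 : ℝ) = ((2:ℕ):ℝ) by push_cast; ring,
                Real.rpow_natCast, sq_abs]
            have e2 : ∀ g : Fin N → Bool,
                (|∑ n, a n * Khin.sg (g n)| ^ (p/2 : ℝ)) ^ 2
                  = |∑ n, a n * Khin.sg (g n)| ^ p := fun g => by
              rw [← Real.rpow_natCast (|∑ n, a n * Khin.sg (g n)| ^ (p/2 : ℝ)) 2,
                ← Real.rpow_mul (abs_nonneg _),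
                show (p/2 : ℝ) * ((2:ℕ):ℝ) = p by push_cast; ring]
            have e3 : ∀ g : Fin N → Bool,
                (|∑ n, a n * Khin.sg (g n)| ^ ((4-p)/2 : ℝ)) ^ 2
                  = |∑ n, a n * Khin.sg (g n)| ^ ((4:ℝ)-p) := fun g => by
              rw [← Real.rpow_natCast (|∑ n, a n * Khin.sg (g n)| ^ ((4-p)/2 : ℝ)) 2,
                ← Real.rpow_mul (abs_nonneg _),
                show ((4-p)/2 : ℝ) * ((2:ℕ):ℝ) = (4:ℝ)-p by push_cast; ring]
            rw [Finset.sum_congr rfl fun g _ => e1 g, Finset.sum_congr rfl fun g _ => e2 g,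
              Finset.sum_congr rfl fun g _ => e3 g, Khin.discrete_sq] at hcs
            have hup4 := Khin.discrete_upper hq4 N a
            have hT'0 : 0 ≤ ∑ g : Fin N → Bool, |∑ n, a n * Khin.sg (g n)| ^ ((4:ℝ)-p) :=
              Finset.sum_nonneg fun g _ => Real.rpow_nonneg (abs_nonneg _) _
            have key2 : ((2:ℝ) ^ N * s) ^ 2 ≤ T * (C' * 2 ^ N * σ ^ ((4:ℝ)-p)) := by
              calc ((2:ℝ) ^ N * s) ^ 2
                  ≤ T * ∑ g : Fin N → Bool, |∑ n, a n * Khin.sg (g n)| ^ ((4:ℝ)-p) := hcs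
                _ ≤ T * (C' * 2 ^ N * σ ^ ((4:ℝ)-p)) := mul_le_mul_of_nonneg_left hup4 hT0
            have hs2 : s ^ 2 = σ ^ ((4:ℝ)-p) * σ ^ p := by
              rw [← Real.rpow_add hσpos, show ((4:ℝ)-p) + p = ((4:ℕ):ℝ) by push_cast; ring,
                Real.rpow_natCast, hσdef, ← Real.rpow_natCast (s ^ ((1:ℝ)/2)) 4,
                ← Real.rpow_mul hs0]
              norm_num
            have hfinal : (2:ℝ) ^ N * σ ^ p ≤ C' * T := by
              have hpos2 : (0:ℝ) < 2 ^ N * σ ^ ((4:ℝ)-p) :=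
                mul_pos h2N (Real.rpow_pos_of_pos hσpos _)
              apply le_of_mul_le_mul_left _ hpos2
              calc (2 ^ N * σ ^ ((4:ℝ)-p)) * ((2:ℝ) ^ N * σ ^ p)
                  = ((2:ℝ) ^ N * s) ^ 2 := by rw [mul_pow, hs2]; ring
                _ ≤ T * (C' * 2 ^ N * σ ^ ((4:ℝ)-p)) := key2
                _ = (2 ^ N * σ ^ ((4:ℝ)-p)) * (C' * T) := by ring
            have hle : σ ^ p / C' ≤ ((2:ℝ) ^ N)⁻¹ * T := by
              rw [div_le_iff₀ hC'pos]
              calc σ ^ p = ((2:ℝ) ^ N)⁻¹ * ((2:ℝ) ^ N * σ ^ p) := by field_simp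
                _ ≤ ((2:ℝ) ^ N)⁻¹ * (C' * T) := mul_le_mul_of_nonneg_left hfinal (by positivity)
                _ = ((2:ℝ) ^ N)⁻¹ * T * C' := by ring
            have heq : (C'⁻¹) ^ ((1:ℝ)/p) * σ = (σ ^ p / C') ^ ((1:ℝ)/p) := by
              rw [div_eq_mul_inv (σ ^ p) C', mul_comm (σ ^ p),
                Real.mul_rpow (inv_nonneg.mpr hC'pos.le) (Real.rpow_nonneg hσ0 p), hσp1p]
            rw [heq]
            exact Real.rpow_le_rpow (div_nonneg (Real.rpow_nonneg hσ0 p) hC'pos.le) hle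
              (by positivity)
      · have heq : (C * σ ^ p) ^ ((1:ℝ)/p) = C ^ ((1:ℝ)/p) * σ := by
          rw [Real.mul_rpow hCpos.le (Real.rpow_nonneg hσ0 p), hσp1p]
        rw [← heq]
        exact Real.rpow_le_rpow hm0 hup (by positivity)
end

section
/- Let 1 ≤ r ≤ 2 and let (y_{i_1,...,i_m}) be an N^m array of real numbers. Then (Σ_{i_1,...,i_m=1}^N |y_{i_1...i_m}|²)^{1/2} ≤ A_r^{-m} (∫_{[0,1]^m} |Σ_{i_1,...,i_m=1}^N r_{i_1}(t_1)···r_{i_m}(t_m) y_{i_1...i_m}|^r dt_1···dt_m)^{1/r}, where A_r is the optimal lower Khinchine constant for exponent r. -/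
open MeasureTheory

section Aux

lemma measurable_real_sign : Measurable Real.sign := by
  unfold Real.sign
  exact Measurable.ite (measurableSet_lt measurable_id measurable_const) measurable_const
    (Measurable.ite (measurableSet_lt measurable_const measurable_id) measurable_const
      measurable_const)

lemma measurable_rademacher (n : ℕ) : Measurable (rademacher n) :=
  measurable_real_sign.comp (Real.continuous_sin.measurable.comp (by fun_prop))

lemma abs_rademacher_le_one (n : ℕ) (t : ℝ) : |rademacher n t| ≤ 1 := by
  rcases Real.sign_apply_eq (Real.sin (2 ^ n * Real.pi * t)) with h | h | h <;>
    simp [rademacher, h]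

lemma integrable_of_bdd {α : Type*} [MeasurableSpace α] {μ : Measure α} [IsFiniteMeasure μ]
    {f : α → ℝ} (hf : Measurable f) {C : ℝ} (h : ∀ x, |f x| ≤ C) : Integrable f μ :=
  ⟨hf.aestronglyMeasurable, HasFiniteIntegral.of_bounded (C := C) (ae_of_all _ h)⟩

lemma minkowski_sum {α : Type*} [MeasurableSpace α] {μ : Measure α} [IsFiniteMeasure μ]
    {N : ℕ} (p : ℝ) (hp : 1 ≤ p) (F : Fin N → α → ℝ) (hFm : ∀ j, Measurable (F j))
    (hFnn : ∀ j x, 0 ≤ F j x) (C : ℝ) (hFb : ∀ j x, F j x ≤ C) :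
    (∑ j, (∫ x, F j x ∂μ) ^ p) ^ (1/p) ≤ ∫ x, (∑ j, (F j x) ^ p) ^ (1/p) ∂μ := by
  set q : ENNReal := ENNReal.ofReal p with hqdef
  haveI : Fact (1 ≤ q) := ⟨ENNReal.one_le_ofReal.2 hp⟩
  have hp0 : (0:ℝ) < p := lt_of_lt_of_le one_pos hp
  have hq : q.toReal = p := ENNReal.toReal_ofReal hp0.le
  set L := (PiLp.continuousLinearEquiv q ℝ (fun _ : Fin N => ℝ)).symm with hLdef
  set Ψ : α → (Fin N → ℝ) := fun x j => F j x with hΨdef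
  have hΨm : Measurable Ψ := measurable_pi_iff.2 fun j => hFm j
  have hΨi : Integrable Ψ μ := by
    refine ⟨hΨm.aestronglyMeasurable, HasFiniteIntegral.of_bounded (C := max C 0) (ae_of_all _ fun x => ?_)⟩
    refine (pi_norm_le_iff_of_nonneg (le_max_right _ _)).2 fun j => ?_
    rw [Real.norm_eq_abs, abs_of_nonneg (hFnn j x)]
    exact le_max_of_le_left (hFb j x)
  have hIL : ∫ x, L (Ψ x) ∂μ = L (∫ x, Ψ x ∂μ) := L.integral_comp_comm Ψ
  have hcomp : ∀ j, (∫ x, Ψ x ∂μ) j = ∫ x, F j x ∂μ := fun j =>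
    ((ContinuousLinearMap.proj (R := ℝ) (φ := fun _ : Fin N => ℝ) j).integral_comp_comm hΨi).symm
  have key := norm_integral_le_integral_norm (μ := μ) (fun x => L (Ψ x))
  rw [hIL] at key
  have hqtop : 0 < q.toReal := by rw [hq]; exact hp0
  have hnL : ‖L (∫ x, Ψ x ∂μ)‖ = (∑ j, (∫ x, F j x ∂μ) ^ p) ^ (1/p) := by
    rw [PiLp.norm_eq_sum hqtop, hq]
    congr 1
    refine Finset.sum_congr rfl fun j _ => ?_
    have : (L (∫ x, Ψ x ∂μ)) j = (∫ x, Ψ x ∂μ) j := rfl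
    rw [this, hcomp j, Real.norm_eq_abs, abs_of_nonneg (integral_nonneg (hFnn j))]
  have hnΦ : ∀ x, ‖L (Ψ x)‖ = (∑ j, (F j x) ^ p) ^ (1/p) := fun x => by
    rw [PiLp.norm_eq_sum hqtop, hq]
    congr 1
    refine Finset.sum_congr rfl fun j _ => ?_
    have : (L (Ψ x)) j = F j x := rfl
    rw [this, Real.norm_eq_abs, abs_of_nonneg (hFnn j x)]
  rw [hnL] at key
  refine key.trans (le_of_eq ?_)
  exact integral_congr_ae (ae_of_all _ fun x => hnΦ x)

lemma rpow_half_sq {x : ℝ} (hx : 0 ≤ x) : (x ^ ((1:ℝ)/2)) ^ (2:ℕ) = x := by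
  rw [← Real.rpow_natCast (x ^ ((1:ℝ)/2)) 2, ← Real.rpow_mul hx]
  norm_num

lemma core_meas {m N : ℕ} (z : (Fin m → Fin N) → ℝ) :
    Measurable (fun t : Fin m → ℝ => ∑ i, (∏ k, rademacher (i k) (t k)) * z i) := by
  refine Finset.measurable_sum _ fun i _ => ?_
  exact (Finset.measurable_prod _ fun k _ =>
    (measurable_rademacher (i k)).comp (measurable_pi_apply k)).mul_const _

lemma abs_prod_rademacher_le_one {m N : ℕ} (i : Fin m → Fin N) (t : Fin m → ℝ) :
    |∏ k, rademacher (i k) (t k)| ≤ 1 := by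
  rw [Finset.abs_prod]
  exact Finset.prod_le_one (fun k _ => abs_nonneg _) (fun k _ => abs_rademacher_le_one _ _)

lemma core_abs_le {m N : ℕ} (z : (Fin m → Fin N) → ℝ) (t : Fin m → ℝ) :
    |∑ i, (∏ k, rademacher (i k) (t k)) * z i| ≤ ∑ i, |z i| := by
  refine (Finset.abs_sum_le_sum_abs _ _).trans (Finset.sum_le_sum fun i _ => ?_)
  rw [abs_mul]
  calc |∏ k, rademacher (i k) (t k)| * |z i| ≤ 1 * |z i| :=
        mul_le_mul_of_nonneg_right (abs_prod_rademacher_le_one i t) (abs_nonneg _)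
    _ = |z i| := one_mul _

lemma restrict_icc_prob : IsProbabilityMeasure (volume.restrict (Set.Icc (0:ℝ) 1)) := by
  constructor
  rw [Measure.restrict_apply MeasurableSet.univ, Set.univ_inter, Real.volume_Icc]
  norm_num

end Aux

lemma multiKhinchine (r : ℝ) (hr1 : 1 ≤ r) (hr2 : r ≤ 2) (A : ℝ) (hA : 0 < A)
    (hP : ∀ (N : ℕ) (a : Fin N → ℝ),
      A * (∑ n, |a n| ^ 2) ^ ((1 : ℝ) / 2)
        ≤ (∫ t, |∑ n, a n * rademacher n t| ^ r ∂(volume.restrict (Set.Icc (0:ℝ) 1))) ^ (1 / r)) :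
    ∀ (m N : ℕ) (y : (Fin m → Fin N) → ℝ),
      A ^ m * (∑ i : Fin m → Fin N, |y i| ^ 2) ^ ((1 : ℝ) / 2)
        ≤ (∫ t : Fin m → ℝ, |∑ i : Fin m → Fin N, (∏ k, rademacher (i k) (t k)) * y i| ^ r
            ∂(Measure.pi fun _ : Fin m => volume.restrict (Set.Icc (0:ℝ) 1))) ^ (1 / r) := by
  haveI := restrict_icc_prob
  have hr0 : (0:ℝ) < r := lt_of_lt_of_le one_pos hr1
  intro m
  induction m with
  | zero =>
    intro N y
    have h1 : ∀ t : Fin 0 → ℝ,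
        |∑ i : Fin 0 → Fin N, (∏ k, rademacher (i k) (t k)) * y i| ^ r = |y default| ^ r := by
      intro t
      congr 1
      rw [Fintype.sum_unique]
      simp
    have h2 : (∑ i : Fin 0 → Fin N, |y i| ^ 2) = |y default| ^ 2 := Fintype.sum_unique _
    rw [h2, pow_zero, one_mul]
    rw [integral_congr_ae (ae_of_all _ h1), integral_const]
    simp only [probReal_univ, one_smul]
    rw [← Real.rpow_natCast |y default| 2, ← Real.rpow_mul (abs_nonneg _),
      ← Real.rpow_mul (abs_nonneg _)]
    rw [show ((2:ℕ):ℝ) * (1/2) = 1 by norm_num, mul_one_div, div_self hr0.ne']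
  | succ m ih =>
    intro N y
    haveI : IsProbabilityMeasure (Measure.pi fun _ : Fin m => volume.restrict (Set.Icc (0:ℝ) 1)) :=
      Measure.pi.instIsProbabilityMeasure _
    haveI : IsProbabilityMeasure (Measure.pi fun _ : Fin (m+1) => volume.restrict (Set.Icc (0:ℝ) 1)) :=
      Measure.pi.instIsProbabilityMeasure _
    set P := volume.restrict (Set.Icc (0:ℝ) 1) with hPdef
    set μm := Measure.pi fun _ : Fin m => P with hμmdef
    set g : Fin N → (Fin m → ℝ) → ℝ :=
      fun j t => ∑ i : Fin m → Fin N, (∏ k, rademacher (i k) (t k)) * y (Fin.cons j i) with hgdef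
    set CC : ℝ := ∑ j' : Fin N, ∑ i : Fin m → Fin N, |y (Fin.cons j' i)| with hCCdef
    have hCC0 : 0 ≤ CC :=
      Finset.sum_nonneg fun j _ => Finset.sum_nonneg fun i _ => abs_nonneg _
    have hgb : ∀ j t, |g j t| ≤ CC := fun j t => by
      refine (core_abs_le _ t).trans ?_
      exact Finset.single_le_sum (f := fun j' => ∑ i : Fin m → Fin N, |y (Fin.cons j' i)|)
        (fun j' _ => Finset.sum_nonneg fun i _ => abs_nonneg _) (Finset.mem_univ j)
    have hgm : ∀ j, Measurable (g j) := fun j => core_meas _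
    set Sf : Fin N → ℝ := fun j => ∑ i : Fin m → Fin N, |y (Fin.cons j i)| ^ 2 with hSfdef
    have hSnn : ∀ j, 0 ≤ Sf j := fun j => Finset.sum_nonneg fun i _ => by positivity
    set Rf : Fin N → ℝ := fun j => ∫ t, |g j t| ^ r ∂μm with hRfdef
    have hRnn : ∀ j, 0 ≤ Rf j :=
      fun j => integral_nonneg fun t => Real.rpow_nonneg (abs_nonneg _) r
    -- squared induction hypothesis
    have hsq : ∀ j, A ^ (2*m) * Sf j ≤ Rf j ^ ((2:ℝ)/r) := by
      intro j
      have h := ih N (fun i => y (Fin.cons j i))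
      have h2 := pow_le_pow_left₀ (by positivity) h 2
      calc A ^ (2*m) * Sf j = (A ^ m * (Sf j) ^ ((1:ℝ)/2)) ^ (2:ℕ) := by
            rw [mul_pow, ← pow_mul, rpow_half_sq (hSnn j), mul_comm 2 m]
        _ ≤ (Rf j ^ ((1:ℝ)/r)) ^ (2:ℕ) := h2
        _ = Rf j ^ ((2:ℝ)/r) := by
            rw [← Real.rpow_natCast (Rf j ^ ((1:ℝ)/r)) 2, ← Real.rpow_mul (hRnn j)]
            congr 1
            push_cast
            ring
    -- Minkowski step
    set W : (Fin m → ℝ) → ℝ := fun t => (∑ j, |g j t| ^ (2:ℕ)) ^ (r/2) with hWdef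
    have hp2r : (1:ℝ) ≤ 2/r := (one_le_div hr0).2 hr2
    have hWnn : ∀ t, 0 ≤ W t :=
      fun t => Real.rpow_nonneg (Finset.sum_nonneg fun j _ => by positivity) _
    have hWint_nn : (0:ℝ) ≤ ∫ t, W t ∂μm := integral_nonneg hWnn
    have hmink : (∑ j, Rf j ^ ((2:ℝ)/r)) ^ (r/2) ≤ ∫ t, W t ∂μm := by
      have hFm : ∀ j, Measurable (fun t => |g j t| ^ r) := fun j =>
        (Real.continuous_rpow_const hr0.le).measurable.comp (hgm j).abs
      have hFnn : ∀ (j) (t : Fin m → ℝ), 0 ≤ |g j t| ^ r :=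
        fun j t => Real.rpow_nonneg (abs_nonneg _) r
      have hFb : ∀ (j) (t : Fin m → ℝ), |g j t| ^ r ≤ CC ^ r :=
        fun j t => Real.rpow_le_rpow (abs_nonneg _) (hgb j t) hr0.le
      have hmk := minkowski_sum (μ := μm) (2/r) hp2r (fun j t => |g j t| ^ r) hFm hFnn _ hFb
      have e1 : (1:ℝ)/(2/r) = r/2 := one_div_div _ _
      have e2 : ∀ (j) (t : Fin m → ℝ), (|g j t| ^ r) ^ ((2:ℝ)/r) = |g j t| ^ (2:ℕ) := by
        intro j t
        rw [← Real.rpow_mul (abs_nonneg _), ← Real.rpow_natCast |g j t| 2]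
        congr 1
        push_cast
        field_simp
      rw [e1] at hmk
      calc (∑ j, Rf j ^ ((2:ℝ)/r)) ^ (r/2)
          = (∑ j, (∫ t, |g j t| ^ r ∂μm) ^ ((2:ℝ)/r)) ^ (r/2) := rfl
        _ ≤ ∫ t, (∑ j, (|g j t| ^ r) ^ ((2:ℝ)/r)) ^ (r/2) ∂μm := hmk
        _ = ∫ t, W t ∂μm := by
            refine integral_congr_ae (ae_of_all _ fun t => ?_)
            rw [hWdef]
            simp only
            congr 1
            exact Finset.sum_congr rfl fun j _ => e2 j t
    have hsum_le : ∑ j, Rf j ^ ((2:ℝ)/r) ≤ (∫ t, W t ∂μm) ^ ((2:ℝ)/r) := by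
      have hnn : (0:ℝ) ≤ ∑ j, Rf j ^ ((2:ℝ)/r) :=
        Finset.sum_nonneg fun j _ => Real.rpow_nonneg (hRnn j) _
      have h2 := Real.rpow_le_rpow (Real.rpow_nonneg hnn _) hmink (by positivity : (0:ℝ) ≤ 2/r)
      rwa [← Real.rpow_mul hnn, show (r/2)*(2/r) = 1 by field_simp, Real.rpow_one] at h2
    -- pointwise Khinchine in the first variable
    set V : (Fin m → ℝ) → ℝ := fun t => ∫ t1, |∑ j, g j t * rademacher j t1| ^ r ∂P with hVdef
    have hVnn : ∀ t, 0 ≤ V t :=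
      fun t => integral_nonneg fun t1 => Real.rpow_nonneg (abs_nonneg _) _
    have hpoint : ∀ t, A ^ r * W t ≤ V t := by
      intro t
      have h := hP N (fun j => g j t)
      have hsum2 : (0:ℝ) ≤ ∑ j, |g j t| ^ 2 := Finset.sum_nonneg fun j _ => by positivity
      have h2 := Real.rpow_le_rpow (by positivity) h hr0.le
      have hfold : (∫ t1, |∑ j, g j t * rademacher j t1| ^ r ∂P) = V t := rfl
      have hWr : ((∑ j, |g j t| ^ 2) ^ ((1:ℝ)/2)) ^ r = W t := by
        rw [← Real.rpow_mul hsum2, show ((1:ℝ)/2*r:ℝ) = r/2 by ring]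
      rw [Real.mul_rpow hA.le (Real.rpow_nonneg hsum2 _), hWr, hfold] at h2
      have hVr : (V t ^ ((1:ℝ)/r)) ^ r = V t := by
        rw [one_div, Real.rpow_inv_rpow (hVnn t) hr0.ne']
      rw [hVr] at h2
      exact h2
    -- integrate the pointwise bound
    have hWm : Measurable W := by
      refine (Real.continuous_rpow_const (by positivity)).measurable.comp ?_
      exact Finset.measurable_sum _ fun j _ => (hgm j).abs.pow_const 2
    have hWb : ∀ t, |W t| ≤ ((N:ℝ) * CC ^ 2) ^ (r/2) := by
      intro t
      rw [abs_of_nonneg (hWnn t)]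
      refine Real.rpow_le_rpow (Finset.sum_nonneg fun j _ => by positivity) ?_ (by positivity)
      calc (∑ j, |g j t| ^ (2:ℕ)) ≤ ∑ _j : Fin N, CC ^ 2 :=
            Finset.sum_le_sum fun j _ =>
              pow_le_pow_left₀ (abs_nonneg _) (hgb j t) 2
        _ = (N:ℝ) * CC ^ 2 := by
            rw [Finset.sum_const, Finset.card_univ, Fintype.card_fin, nsmul_eq_mul]
    set H : ℝ × (Fin m → ℝ) → ℝ := fun p => |∑ j, g j p.2 * rademacher j p.1| ^ r with hHdef
    have hHm : Measurable H := by
      refine (Real.continuous_rpow_const hr0.le).measurable.comp (Measurable.abs ?_)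
      exact Finset.measurable_sum _ fun j _ =>
        ((hgm j).comp measurable_snd).mul ((measurable_rademacher j).comp measurable_fst)
    have hHb : ∀ p, |H p| ≤ ((N:ℝ) * CC) ^ r := by
      intro p
      rw [hHdef]
      simp only
      rw [abs_of_nonneg (Real.rpow_nonneg (abs_nonneg _) _)]
      refine Real.rpow_le_rpow (abs_nonneg _) ?_ hr0.le
      calc |∑ j, g j p.2 * rademacher j p.1| ≤ ∑ j, |g j p.2 * rademacher j p.1| :=
            Finset.abs_sum_le_sum_abs _ _
        _ ≤ ∑ _j : Fin N, CC := by
            refine Finset.sum_le_sum fun j _ => ?_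
            rw [abs_mul]
            calc |g j p.2| * |rademacher j p.1| ≤ CC * 1 :=
                  mul_le_mul (hgb j p.2) (abs_rademacher_le_one _ _) (abs_nonneg _) hCC0
              _ = CC := mul_one _
        _ = (N:ℝ) * CC := by
            rw [Finset.sum_const, Finset.card_univ, Fintype.card_fin, nsmul_eq_mul]
    have hHi : Integrable H (P.prod μm) := integrable_of_bdd hHm hHb
    have hVi : Integrable V μm := hHi.integral_prod_right
    have hint : A ^ r * (∫ t, W t ∂μm) ≤ ∫ t, V t ∂μm := by
      have h1 : Integrable (fun t => A ^ r * W t) μm :=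
        (integrable_of_bdd hWm hWb).const_mul _
      have h2 := integral_mono h1 hVi hpoint
      rwa [integral_const_mul] at h2
    have hswap : ∫ t, V t ∂μm = ∫ p, H p ∂(P.prod μm) := by
      have h1 := integral_integral_swap (f := fun t t1 => H (t1, t)) (μ := μm) (ν := P)
        (by exact hHi.swap)
      rw [integral_prod H hHi]
      exact h1
    -- reindexing
    have hreindex : ∀ f : (Fin (m+1) → Fin N) → ℝ,
        ∑ i, f i = ∑ j : Fin N, ∑ i : Fin m → Fin N, f (Fin.cons j i) := by
      intro f
      rw [← Equiv.sum_comp (Fin.consEquiv fun _ : Fin (m+1) => Fin N) f, Fintype.sum_prod_type]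
      rfl
    -- identify the product integral with the pi integral
    have hmp := measurePreserving_piFinSuccAbove (fun _ : Fin (m+1) => P) 0
    have hT : (∫ t : Fin (m+1) → ℝ,
          |∑ i : Fin (m+1) → Fin N, (∏ k, rademacher (i k) (t k)) * y i| ^ r
          ∂(Measure.pi fun _ : Fin (m+1) => P)) = ∫ p, H p ∂(P.prod μm) := by
      rw [← hmp.integral_comp
        (MeasurableEquiv.piFinSuccAbove (fun _ : Fin (m+1) => ℝ) 0).measurableEmbedding H]
      refine integral_congr_ae (ae_of_all _ fun t => ?_)
      show |∑ i : Fin (m+1) → Fin N, (∏ k, rademacher (i k) (t k)) * y i| ^ r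
        = H ((MeasurableEquiv.piFinSuccAbove (fun _ : Fin (m+1) => ℝ) 0) t)
      have h1 : ∑ i : Fin (m+1) → Fin N, (∏ k, rademacher (i k) (t k)) * y i
          = ∑ j, g j (fun k => t k.succ) * rademacher j (t 0) := by
        rw [hreindex]
        refine Finset.sum_congr rfl fun j _ => ?_
        rw [hgdef]
        simp only
        rw [Finset.sum_mul]
        refine Finset.sum_congr rfl fun i _ => ?_
        rw [Fin.prod_univ_succ]
        simp only [Fin.cons_zero, Fin.cons_succ]
        ring
      have h2 : H (MeasurableEquiv.piFinSuccAbove (fun _ : Fin (m+1) => ℝ) 0 t)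
          = |∑ j, g j (fun k => t k.succ) * rademacher j (t 0)| ^ r := by
        rw [hHdef]
        simp only [MeasurableEquiv.piFinSuccAbove_apply]
        congr 1
      rw [h1, h2]
    -- final assembly
    have hS : (∑ i : Fin (m+1) → Fin N, |y i| ^ 2) = ∑ j, Sf j :=
      hreindex fun i => |y i| ^ 2
    have hT_nn : (0:ℝ) ≤ ∫ p, H p ∂(P.prod μm) :=
      integral_nonneg fun p => Real.rpow_nonneg (abs_nonneg _) _
    have hchain : A ^ (2*m) * ∑ j, Sf j ≤ (∫ t, W t ∂μm) ^ ((2:ℝ)/r) := by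
      calc A ^ (2*m) * ∑ j, Sf j = ∑ j, A ^ (2*m) * Sf j := Finset.mul_sum _ _ _
        _ ≤ ∑ j, Rf j ^ ((2:ℝ)/r) := Finset.sum_le_sum fun j _ => hsq j
        _ ≤ _ := hsum_le
    rw [hS]
    have hSsum_nn : (0:ℝ) ≤ ∑ j, Sf j := Finset.sum_nonneg fun j _ => hSnn j
    calc A ^ (m+1) * (∑ j, Sf j) ^ ((1:ℝ)/2)
        = A * (A ^ (2*m) * ∑ j, Sf j) ^ ((1:ℝ)/2) := by
          rw [Real.mul_rpow (by positivity) hSsum_nn,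
            show (A:ℝ) ^ (2*m) = (A^m)^(2:ℕ) by rw [← pow_mul, mul_comm],
            ← Real.rpow_natCast (A^m) 2, ← Real.rpow_mul (by positivity)]
          rw [show ((2:ℕ):ℝ) * ((1:ℝ)/2) = 1 by norm_num, Real.rpow_one, pow_succ]
          ring
      _ ≤ A * ((∫ t, W t ∂μm) ^ ((2:ℝ)/r)) ^ ((1:ℝ)/2) := by
          refine mul_le_mul_of_nonneg_left ?_ hA.le
          exact Real.rpow_le_rpow (by positivity) hchain (by norm_num)
      _ = A * (∫ t, W t ∂μm) ^ ((1:ℝ)/r) := by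
          rw [← Real.rpow_mul hWint_nn, show ((2:ℝ)/r) * ((1:ℝ)/2) = 1/r from by
            rw [div_mul_div_comm, mul_comm r 2, ← div_div]; norm_num]
      _ = (A ^ r * ∫ t, W t ∂μm) ^ ((1:ℝ)/r) := by
          rw [Real.mul_rpow (Real.rpow_nonneg hA.le _) hWint_nn, one_div,
            Real.rpow_rpow_inv hA.le hr0.ne']
      _ ≤ (∫ p, H p ∂(P.prod μm)) ^ ((1:ℝ)/r) := by
          refine Real.rpow_le_rpow (mul_nonneg (Real.rpow_nonneg hA.le _) hWint_nn) ?_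
            (by positivity)
          rw [← hswap]
          exact hint
      _ = (∫ t : Fin (m+1) → ℝ,
            |∑ i : Fin (m+1) → Fin N, (∏ k, rademacher (i k) (t k)) * y i| ^ r
            ∂(Measure.pi fun _ : Fin (m+1) => P)) ^ ((1:ℝ)/r) := by rw [hT]

lemma restrict_pi_eq (m : ℕ) :
    (volume : Measure (Fin m → ℝ)).restrict (Set.univ.pi fun _ => Set.Icc (0:ℝ) 1)
      = Measure.pi fun _ : Fin m => volume.restrict (Set.Icc (0:ℝ) 1) := by
  refine (Measure.pi_eq (μ := fun _ : Fin m => volume.restrict (Set.Icc (0:ℝ) 1)) fun s hs => ?_).symm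
  rw [Measure.restrict_apply (MeasurableSet.univ_pi hs), ← Set.pi_inter_distrib,
    volume_pi, Measure.pi_pi]
  exact Finset.prod_congr rfl fun i _ => (Measure.restrict_apply (hs i)).symm

theorem stmt_10 (r : ℝ) (hr1 : 1 ≤ r) (hr2 : r ≤ 2) (A : ℝ) (hA : 0 < A)
    (hlow : ∀ (N : ℕ) (a : Fin N → ℝ),
      A * (∑ n, |a n| ^ 2) ^ ((1 : ℝ) / 2)
        ≤ (∫ t in (0 : ℝ)..1, |∑ n, a n * rademacher n t| ^ r) ^ (1 / r))
    (m N : ℕ) (y : (Fin m → Fin N) → ℝ) :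
    (∑ i : Fin m → Fin N, |y i| ^ 2) ^ ((1 : ℝ) / 2)
      ≤ A ^ (-(m : ℝ)) *
        (∫ t : Fin m → ℝ in Set.univ.pi fun _ => Set.Icc (0 : ℝ) 1,
          |∑ i : Fin m → Fin N, (∏ k, rademacher (i k) (t k)) * y i| ^ r) ^ (1 / r) := by
  have hP : ∀ (N : ℕ) (a : Fin N → ℝ),
      A * (∑ n, |a n| ^ 2) ^ ((1 : ℝ) / 2)
        ≤ (∫ t, |∑ n, a n * rademacher n t| ^ r
            ∂(volume.restrict (Set.Icc (0:ℝ) 1))) ^ (1 / r) := by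
    intro N a
    have h := hlow N a
    rwa [intervalIntegral.integral_of_le zero_le_one,
      ← MeasureTheory.integral_Icc_eq_integral_Ioc] at h
  have key := multiKhinchine r hr1 hr2 A hA hP m N y
  have hmeq : (∫ t : Fin m → ℝ in Set.univ.pi fun _ => Set.Icc (0 : ℝ) 1,
        |∑ i : Fin m → Fin N, (∏ k, rademacher (i k) (t k)) * y i| ^ r)
      = ∫ t : Fin m → ℝ, |∑ i : Fin m → Fin N, (∏ k, rademacher (i k) (t k)) * y i| ^ r
          ∂(Measure.pi fun _ : Fin m => volume.restrict (Set.Icc (0:ℝ) 1)) := by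
    rw [restrict_pi_eq]
  rw [hmeq, Real.rpow_neg hA.le, Real.rpow_natCast]
  have hApos : (0:ℝ) < A ^ m := pow_pos hA m
  calc (∑ i : Fin m → Fin N, |y i| ^ 2) ^ ((1 : ℝ) / 2)
      = (A ^ m)⁻¹ * (A ^ m * (∑ i : Fin m → Fin N, |y i| ^ 2) ^ ((1 : ℝ) / 2)) := by
        rw [← mul_assoc, inv_mul_cancel₀ hApos.ne', one_mul]
    _ ≤ (A ^ m)⁻¹ * (∫ t : Fin m → ℝ,
          |∑ i : Fin m → Fin N, (∏ k, rademacher (i k) (t k)) * y i| ^ r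
          ∂(Measure.pi fun _ : Fin m => volume.restrict (Set.Icc (0:ℝ) 1))) ^ (1 / r) :=
        mul_le_mul_of_nonneg_left key (inv_nonneg.2 hApos.le)
end
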